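/- arXiv:1609.09670 — 2 statements merged into one kernel-verified Lean document; each statement's English description precedes it below -/
import Mathlib

section
/- In an exact category E, if there exists an admissible monomorphism M → T' with T' ∈ add T, then any left add(T)-approximation f: M → R is an admissible monomorphism. -/
/-!
Factor the given inflation `ι : M ⟶ T'` through the approximation as `ι = f ≫ h`. In the
pushout of `f` and `ι`, the leg `T' ⟶ P` is split by `[h, 𝟙]`, so `f ≫ inl = ι ≫ inr` is an
inflation, and `inl` is one by pushout stability; the obscure axiom then makes `f` an inflation.
-/

open CategoryTheory Limits

/-- `X` belongs to `add T`: it is a direct summand of a finite direct sum of copies of `T`. -/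
def MemAdd {E : Type*} [Category E] [Preadditive E] [HasFiniteBiproducts E]
    [HasBinaryBiproducts E] (T X : E) : Prop :=
  ∃ (n : ℕ) (Y : E), Nonempty ((X ⊞ Y) ≅ ⨁ fun _ : Fin n => T)

lemma isSplitMono_pushout_inr_of_fac {E : Type*} [Category E] {X Y Z : E}
    (f : X ⟶ Y) (g : X ⟶ Z) [HasPushout f g] (h : Y ⟶ Z) (hfac : f ≫ h = g) :
    IsSplitMono (pushout.inr f g) :=
  IsSplitMono.mk' ⟨pushout.desc h (𝟙 Z) (by rw [hfac, Category.comp_id]), pushout.inr_desc _ _ _⟩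

lemma CategoryTheory.MorphismProperty.of_comp_of_pushout_stable
    {E : Type*} [Category E] [HasPushouts E]
    (I : MorphismProperty E)
    (hcomp : ∀ {X Y Z : E} (f : X ⟶ Y) (g : Y ⟶ Z), I f → I g → I (f ≫ g))
    (hsplit : ∀ {X Y : E} (f : X ⟶ Y), IsSplitMono f → I f)
    (hstab : ∀ {X Y Z : E} (f : X ⟶ Y) (ι : X ⟶ Z), I ι → I (pushout.inl f ι))
    (hobscure : ∀ {X Y Z : E} (f : X ⟶ Y) (g : Y ⟶ Z), I (f ≫ g) → I g → I f)
    {X Y Z : E} (f : X ⟶ Y) (h : Y ⟶ Z) (hfh : I (f ≫ h)) : I f := by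
  have hinr : I (pushout.inr f (f ≫ h)) :=
    hsplit _ (isSplitMono_pushout_inr_of_fac f (f ≫ h) h rfl)
  have hsquare : I (f ≫ pushout.inl f (f ≫ h)) := by
    rw [pushout.condition]
    exact hcomp _ _ hfh hinr
  exact hobscure _ _ hsquare (hstab f (f ≫ h) hfh)

theorem left_approximation_admissible_mono_general
    {E : Type*} [Category E] [Preadditive E] [HasFiniteBiproducts E] [HasBinaryBiproducts E]
    [HasPushouts E]
    (I : MorphismProperty E)
    (hcomp : ∀ {X Y Z : E} (f : X ⟶ Y) (g : Y ⟶ Z), I f → I g → I (f ≫ g))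
    (hsplit : ∀ {X Y : E} (f : X ⟶ Y), IsSplitMono f → I f)
    (hstab : ∀ {X Y Z : E} (f : X ⟶ Y) (ι : X ⟶ Z), I ι → I (pushout.inl f ι))
    (hobscure : ∀ {X Y Z : E} (f : X ⟶ Y) (g : Y ⟶ Z), I (f ≫ g) → I g → I f)
    (T M : E)
    (hexists : ∃ (T' : E) (ι : M ⟶ T'), MemAdd T T' ∧ I ι)
    (R : E) (f : M ⟶ R)
    (happrox : ∀ T'' : E, MemAdd T T'' → ∀ g : M ⟶ T'', ∃ h : R ⟶ T'', f ≫ h = g) :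
    I f := by
  obtain ⟨T', ι, hT', hι⟩ := hexists
  obtain ⟨h, rfl⟩ := happrox T' hT' ι
  exact I.of_comp_of_pushout_stable hcomp hsplit hstab hobscure f h hι

/-- In an exact category `E` (with inflations `I` satisfying the axioms of an
exact structure: closure under composition, split monomorphisms are inflations, stability
under pushout, and the (dual) obscure axiom), if there exists an admissible monomorphism
`M → T'` with `T' ∈ add T`, then any left `add T`-approximation `f : M → R` is an
admissible monomorphism. -/
theorem left_approximation_admissible_mono
    {E : Type*} [Category E] [Preadditive E] [HasFiniteBiproducts E] [HasBinaryBiproducts E]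
    [HasPushouts E]
    (I : MorphismProperty E)
    (hcomp : ∀ {X Y Z : E} (f : X ⟶ Y) (g : Y ⟶ Z), I f → I g → I (f ≫ g))
    (hsplit : ∀ {X Y : E} (f : X ⟶ Y), IsSplitMono f → I f)
    (hstab : ∀ {X Y Z : E} (f : X ⟶ Y) (ι : X ⟶ Z), I ι → I (pushout.inl f ι))
    (hobscure : ∀ {X Y Z : E} (f : X ⟶ Y) (g : Y ⟶ Z), I (f ≫ g) → I g → I f)
    (T M : E)
    (hexists : ∃ (T' : E) (ι : M ⟶ T'), MemAdd T T' ∧ I ι)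
    (R : E) (hR : MemAdd T R) (f : M ⟶ R)
    (happrox : ∀ T'' : E, MemAdd T T'' → ∀ g : M ⟶ T'', ∃ h : R ⟶ T'', f ≫ h = g) :
    I f :=
  left_approximation_admissible_mono_general I hcomp hsplit hstab hobscure T M hexists R f happrox
end

section
/- Let E be an exact category, f: R → M a morphism, and π: T' → M an admissible epimorphism such that π factors through f (π = f∘h for some h: T' → R). Form the pullback of f along π. Then the pullback projection g: X → T' is a split epimorphism, and consequently f is an admissible epimorphism. -/
open CategoryTheory Limits

theorem isSplitEpi_pullback_snd_of_fac {E : Type*} [Category E] {R M T' : E}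
    (f : R ⟶ M) (π : T' ⟶ M) [HasPullback f π] (h : T' ⟶ R) (hh : h ≫ f = π) :
    IsSplitEpi (pullback.snd f π) :=
  ⟨⟨pullback.lift h (𝟙 T') (by rw [hh, Category.id_comp]), pullback.lift_snd _ _ _⟩⟩

theorem of_isSplitEpi_pullback_snd {E : Type*} [Category E] (D : MorphismProperty E)
    (hcomp : ∀ {X Y Z : E} (f : X ⟶ Y) (g : Y ⟶ Z), D f → D g → D (f ≫ g))
    (hsplit : ∀ {X Y : E} (f : X ⟶ Y), IsSplitEpi f → D f)
    (hobscure : ∀ {X Y Z : E} (f : X ⟶ Y) (g : Y ⟶ Z), D (f ≫ g) → D f → D g)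
    {R M T' : E} (f : R ⟶ M) (π : T' ⟶ M) [HasPullback f π] (hπ : D π)
    (hfst : D (pullback.fst f π)) (hsnd : IsSplitEpi (pullback.snd f π)) : D f := by
  have hfst_f : D (pullback.fst f π ≫ f) := by
    rw [pullback.condition]
    exact hcomp _ _ (hsplit _ hsnd) hπ
  exact hobscure _ _ hfst_f hfst

/-- In an exact category `E` (deflations `D` closed under composition,
containing split epimorphisms, stable under pullback, and satisfying the dual obscure
axiom), if `f : R → M` is a morphism and `π : T' → M` an admissible epimorphism factoring
through `f` (i.e. `π = f ∘ h`), then the pullback projection `g : X → T'` of the pullback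
of `f` along `π` is a split epimorphism, and consequently `f` is an admissible
epimorphism. -/
theorem factoring_through_deflation
    {E : Type*} [Category E] [HasPullbacks E]
    (D : MorphismProperty E)
    (hcomp : ∀ {X Y Z : E} (f : X ⟶ Y) (g : Y ⟶ Z), D f → D g → D (f ≫ g))
    (hsplit : ∀ {X Y : E} (f : X ⟶ Y), IsSplitEpi f → D f)
    (hstab : ∀ {X Y Z : E} (f : X ⟶ Z) (π : Y ⟶ Z), D π → D (pullback.fst f π))
    (hobscure : ∀ {X Y Z : E} (f : X ⟶ Y) (g : Y ⟶ Z), D (f ≫ g) → D f → D g)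
    {R M T' : E} (f : R ⟶ M) (π : T' ⟶ M) (hπ : D π)
    (h : T' ⟶ R) (hh : h ≫ f = π) :
    IsSplitEpi (pullback.snd f π) ∧ D f := by
  have hsnd := isSplitEpi_pullback_snd_of_fac f π h hh
  exact ⟨hsnd, of_isSplitEpi_pullback_snd D hcomp hsplit hobscure f π hπ (hstab f π hπ) hsnd⟩
end
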